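/- Weak Deduction Theorem for WF_[→]: for all formulas A, B of the implicational language, {A} ⊢_{WF_[→]} B if and only if ⊢_{WF_[→]} A→B. -/
import Mathlib


/-- Implicational formulas: built from propositional variables using only `→`. -/
inductive Fm : Type
  | var : ℕ → Fm
  | imp : Fm → Fm → Fm

/-- `chain [A₁,…,Aₙ] E` is the formula `A₁→(A₂→(⋯→(Aₙ→E)⋯))` (and `E` when n = 0). -/
def chain : List Fm → Fm → Fm
  | [], E => E
  | A :: L, E => Fm.imp A (chain L E)

/-- Theorems of the Hilbert system `WF_[→]`. -/
inductive WFThm : Fm → Prop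
  | id (A : Fm) : WFThm (A.imp A)
  | mp {A B : Fm} : WFThm A → WFThm (A.imp B) → WFThm B
  | afort {A : Fm} (B : Fm) : WFThm A → WFThm (B.imp A)
  | trans {A B C : Fm} : WFThm (A.imp B) → WFThm (B.imp C) → WFThm (A.imp C)
  | equiv {A B C D : Fm} :
      WFThm (A.imp B) → WFThm (B.imp A) → WFThm (C.imp D) → WFThm (D.imp C) →
      WFThm ((A.imp C).imp (B.imp D))

/-- Derivations from assumptions in `WF_[→]`: members of `Γ` and theorems may be used;
rules (3), (4) and (5) only apply to theorems; modus ponens only with a theorem major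
premise. -/
inductive WFDeriv (Γ : Set Fm) : Fm → Prop
  | hyp {A : Fm} : A ∈ Γ → WFDeriv Γ A
  | thm {A : Fm} : WFThm A → WFDeriv Γ A
  | wmp {A B : Fm} : WFDeriv Γ A → WFThm (A.imp B) → WFDeriv Γ B

/-- Weak Deduction Theorem for `WF_[→]`: `{A} ⊢ B` iff `⊢ A → B`. -/
theorem weak_deduction_WF (A B : Fm) :
    WFDeriv ({A} : Set Fm) B ↔ WFThm (A.imp B) := by
  constructor
  · intro h
    induction h with
    | hyp h => cases h; exact WFThm.id A
    | thm h => exact WFThm.afort A h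
    | wmp _ h ih => exact WFThm.trans ih h
  · intro h
    exact WFDeriv.wmp (WFDeriv.hyp rfl) h
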